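/- If (X, Π) is a finite quasiconcave quasisubmodular aggregative game for which a fESS exists, then in the induced symmetric game with payoff π(x, y) = Π(x, a(x, y)), imitation is not subject to a money pump. -/

import Mathlib

/-- The imitator's action sequence: `y₀` initially; imitate the opponent's previous
action iff it earned a strictly positive relative payoff. -/
noncomputable def imitSeq {X : Type*} (Δ : X → X → ℝ) (x : ℕ → X) (y0 : X) : ℕ → X
  | 0 => y0
  | t + 1 => if 0 < Δ (x t) (imitSeq Δ x y0 t) then x t else imitSeq Δ x y0 t

/-- Imitation is not subject to a money pump: there is a uniform bound `M` on the sum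
of the opponent's relative payoffs, for every initial action of the imitator, every
opponent sequence, and every horizon. -/
def NoMoneyPump {X : Type*} (Δ : X → X → ℝ) : Prop :=
  ∃ M : ℝ, ∀ (y0 : X) (x : ℕ → X) (T : ℕ),
    ∑ t ∈ Finset.range (T + 1), Δ (x t) (imitSeq Δ x y0 t) ≤ M

/-! Quasisubmodularity and quasiconcavity make beating monotone: an action that beats a smaller
one beats everything below it, and one that beats a larger one beats everything above it. Hence
the imitator never returns to an action it has abandoned, so it switches at most `|X|` times.
Only switches give the opponent a positive relative payoff, each at most `max Δ`. -/

theorem exists_step_into {X : Type*} (w : ℕ → X) {s j : ℕ} (hsj : s ≤ j) (hne : w s ≠ w j) :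
    ∃ i, s ≤ i ∧ i < j ∧ w i ≠ w j ∧ w (i + 1) = w j := by
  induction j, hsj using Nat.le_induction with
  | base => exact absurd rfl hne
  | succ j hsj ih =>
    by_cases hstay : w j = w (j + 1)
    · obtain ⟨i, hsi, hij, hwi, hwi'⟩ := ih (hstay ▸ hne)
      exact ⟨i, hsi, by omega, hstay ▸ hwi, hstay ▸ hwi'⟩
    · exact ⟨j, hsj, by omega, hstay, rfl⟩

theorem exists_step_into_of_cycle {X : Type*} (w : ℕ → X) {s u j : ℕ} (hsu : s < u)
    (hcycle : w u = w s) (hleave : w (s + 1) ≠ w s) (hsj : s ≤ j) (hju : j ≤ u) :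
    ∃ i, s ≤ i ∧ i < u ∧ w i ≠ w j ∧ w (i + 1) = w j := by
  by_cases hs : w s = w j
  · obtain ⟨i, hsi, hiu, hwi, hwi'⟩ :=
      exists_step_into w (by omega : s + 1 ≤ u) (by rwa [hcycle])
    exact ⟨i, by omega, hiu, by rwa [hcycle, hs] at hwi, by rwa [hcycle, hs] at hwi'⟩
  · obtain ⟨i, hsi, hij, hwi, hwi'⟩ := exists_step_into w hsj hs
    exact ⟨i, hsi, by omega, hwi, hwi'⟩

section Imitation

variable {X : Type*} (Δ : X → X → ℝ) (x : ℕ → X) (y0 : X)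

theorem imitSeq_succ_of_pos {t : ℕ} (h : 0 < Δ (x t) (imitSeq Δ x y0 t)) :
    imitSeq Δ x y0 (t + 1) = x t := by
  rw [imitSeq, if_pos h]

theorem imitSeq_pos_of_succ_ne {t : ℕ} (h : imitSeq Δ x y0 t ≠ imitSeq Δ x y0 (t + 1)) :
    0 < Δ (imitSeq Δ x y0 (t + 1)) (imitSeq Δ x y0 t) := by
  by_cases hpos : 0 < Δ (x t) (imitSeq Δ x y0 t)
  · rwa [imitSeq_succ_of_pos Δ x y0 hpos]
  · exact absurd (by rw [imitSeq, if_neg hpos]) h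

variable {Δ} [LinearOrder X] (hanti : ∀ a b, Δ b a = -Δ a b)
  (hdown : ∀ a b c : X, b < a → 0 < Δ a b → c ≤ b → 0 < Δ a c)
  (hup : ∀ a b c : X, a < b → 0 < Δ a b → b ≤ c → 0 < Δ a c)
include hanti hdown hup

/-- On a cycle, the largest action visited was entered from a smaller one and hence beats the
smallest; symmetrically the smallest beats the largest. -/
theorem imitSeq_ne_of_lt_of_pos {s u : ℕ} (hsu : s < u)
    (hswitch : 0 < Δ (x s) (imitSeq Δ x y0 s)) : imitSeq Δ x y0 u ≠ imitSeq Δ x y0 s := by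
  set w := imitSeq Δ x y0
  intro hcycle
  have hleave : w (s + 1) ≠ w s := by
    intro h
    have hsucc : w (s + 1) = x s := imitSeq_succ_of_pos Δ x y0 hswitch
    rw [← hsucc, h] at hswitch
    linarith [hanti (w s) (w s)]
  have hF : (Finset.Icc s u).Nonempty := ⟨s, Finset.mem_Icc.mpr ⟨le_rfl, hsu.le⟩⟩
  have entered : ∀ j ∈ Finset.Icc s u, ∃ i ∈ Finset.Icc s u, w i ≠ w j ∧ 0 < Δ (w j) (w i) := by
    intro j hj
    obtain ⟨hsj, hju⟩ := Finset.mem_Icc.mp hj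
    obtain ⟨i, hsi, hiu, hwi, hwi'⟩ := exists_step_into_of_cycle w hsu hcycle hleave hsj hju
    refine ⟨i, Finset.mem_Icc.mpr ⟨hsi, hiu.le⟩, hwi, ?_⟩
    have hstep : w i ≠ w (i + 1) → 0 < Δ (w (i + 1)) (w i) := imitSeq_pos_of_succ_ne Δ x y0
    rw [← hwi']
    exact hstep (by rwa [hwi'])
  obtain ⟨jM, hjM, hmax⟩ := Finset.exists_max_image _ w hF
  obtain ⟨jm, hjm, hmin⟩ := Finset.exists_min_image _ w hF
  have hMm : 0 < Δ (w jM) (w jm) := by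
    obtain ⟨i, hi, hne, hpos⟩ := entered jM hjM
    exact hdown _ _ _ (lt_of_le_of_ne (hmax i hi) hne) hpos (hmin i hi)
  have hmM : 0 < Δ (w jm) (w jM) := by
    obtain ⟨i, hi, hne, hpos⟩ := entered jm hjm
    exact hup _ _ _ (lt_of_le_of_ne (hmin i hi) hne.symm) hpos (hmax i hi)
  linarith [hanti (w jm) (w jM)]

theorem card_filter_pos_le_card [Fintype X] (T : ℕ) :
    ((Finset.range (T + 1)).filter fun t => 0 < Δ (x t) (imitSeq Δ x y0 t)).card ≤
      Fintype.card X := by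
  refine Finset.card_le_card_of_injOn (imitSeq Δ x y0) (fun _ _ => Finset.mem_univ _) ?_
  intro t₁ ht₁ t₂ ht₂ heq
  have hpos₁ := (Finset.mem_filter.mp ht₁).2
  have hpos₂ := (Finset.mem_filter.mp ht₂).2
  rcases lt_trichotomy t₁ t₂ with h | h | h
  · exact absurd heq.symm (imitSeq_ne_of_lt_of_pos x y0 hanti hdown hup h hpos₁)
  · exact h
  · exact absurd heq (imitSeq_ne_of_lt_of_pos x y0 hanti hdown hup h hpos₂)

omit x y0 in
theorem noMoneyPump_of_antisymm_of_pos_mono [Fintype X] : NoMoneyPump Δ := by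
  obtain ⟨C, hC⟩ := Finite.exists_le fun p : X × X => Δ p.1 p.2
  refine ⟨Fintype.card X * C, fun y0 x T => ?_⟩
  have hC0 : 0 ≤ C := by linarith [hC (y0, y0), hanti y0 y0]
  set S := (Finset.range (T + 1)).filter fun t => 0 < Δ (x t) (imitSeq Δ x y0 t)
  calc ∑ t ∈ Finset.range (T + 1), Δ (x t) (imitSeq Δ x y0 t)
      ≤ ∑ t ∈ S, Δ (x t) (imitSeq Δ x y0 t) := by
        rw [← Finset.sum_filter_add_sum_filter_not _ fun t => 0 < Δ (x t) (imitSeq Δ x y0 t)]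
        exact add_le_of_nonpos_right
          (Finset.sum_nonpos fun t ht => le_of_not_gt (Finset.mem_filter.mp ht).2)
    _ ≤ ∑ _t ∈ S, C := Finset.sum_le_sum fun t _ => hC (x t, imitSeq Δ x y0 t)
    _ = S.card * C := by rw [Finset.sum_const, nsmul_eq_mul]
    _ ≤ Fintype.card X * C := by
        gcongr
        exact card_filter_pos_le_card x y0 hanti hdown hup T

end Imitation

section AggregativeGame

variable {X Z : Type*} [LinearOrder X] [LinearOrder Z]

/-- `Π(a, a(a, b)) - Π(b, a(a, b))`, which is `Δ(a, b)` when the aggregator is symmetric. -/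
def relPayoff (agg : X → X → Z) (Pi : X → Z → ℝ) (a b : X) : ℝ :=
  Pi a (agg a b) - Pi b (agg a b)

variable {agg : X → X → Z} {Pi : X → Z → ℝ} (hagg : ∀ a, StrictMono (agg a))
  (hqc : ∀ (x x' x'' : X) (z : Z), x < x' → x' < x'' → min (Pi x z) (Pi x'' z) ≤ Pi x' z)
include hagg hqc

/-- Lowering the opponent's action lowers the aggregate, so by quasisubmodularity `a` still beats
`b`, and by quasiconcavity `b`, lying between `a` and `c`, does at least as well as `c`. -/
theorem relPayoff_pos_of_le
    (hqsub : ∀ (x' x'' : X) (z' z'' : Z), x' < x'' → z' < z'' →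
      0 < Pi x'' z'' - Pi x' z'' → 0 < Pi x'' z' - Pi x' z')
    {a b c : X} (hba : b < a) (hpos : 0 < relPayoff agg Pi a b) (hcb : c ≤ b) :
    0 < relPayoff agg Pi a c := by
  rcases hcb.eq_or_lt with rfl | hcb
  · exact hpos
  have hab : Pi b (agg a c) < Pi a (agg a c) :=
    sub_pos.mp (hqsub b a _ _ hba (hagg a hcb) hpos)
  have hcb' : Pi c (agg a c) ≤ Pi b (agg a c) := by
    have := hqc c b a (agg a c) hcb hba
    rcases min_le_iff.mp this with h | h <;> linarith
  unfold relPayoff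
  linarith

/-- Raising the opponent's action raises the aggregate, so by quasisubmodularity `a` still beats
`b`, and by quasiconcavity `b`, lying between `a` and `c`, does at least as well as `c`. -/
theorem relPayoff_pos_of_ge
    (hqsub : ∀ (x' x'' : X) (z' z'' : Z), x' < x'' → z' < z'' →
      0 ≤ Pi x'' z'' - Pi x' z'' → 0 ≤ Pi x'' z' - Pi x' z')
    {a b c : X} (hab : a < b) (hpos : 0 < relPayoff agg Pi a b) (hbc : b ≤ c) :
    0 < relPayoff agg Pi a c := by
  rcases hbc.eq_or_lt with rfl | hbc
  · exact hpos
  have hba : Pi b (agg a c) < Pi a (agg a c) := by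
    by_contra h
    have := hqsub a b _ _ hab (hagg a hbc) (sub_nonneg.mpr (not_lt.mp h))
    unfold relPayoff at hpos
    linarith
  have := hqc a b c (agg a c) hab hbc
  unfold relPayoff
  rcases min_le_iff.mp this with h | h <;> linarith

end AggregativeGame

theorem stmt17_general
    {X Z : Type*} [LinearOrder X] [LinearOrder Z]
    (agg : X → X → Z)
    (hsym : ∀ x y : X, agg x y = agg y x)
    (hmono : ∀ x' x'' y' y'' : X, x' ≤ x'' → y' ≤ y'' → (x'', y'') ≠ (x', y') →
      agg x' y' < agg x'' y'')
    (Pi : X → Z → ℝ)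
    [Fintype X]
    (hqsub : ∀ (x' x'' : X) (z' z'' : Z), x' < x'' → z' < z'' →
      (0 ≤ Pi x'' z'' - Pi x' z'' → 0 ≤ Pi x'' z' - Pi x' z') ∧
      (0 < Pi x'' z'' - Pi x' z'' → 0 < Pi x'' z' - Pi x' z'))
    (hqc : ∀ (x x' x'' : X) (z : Z), x < x' → x' < x'' →
      min (Pi x z) (Pi x'' z) ≤ Pi x' z)
    (Δ : X → X → ℝ)
    (hΔ : ∀ x y : X, Δ x y = Pi x (agg x y) - Pi y (agg y x)) :
    NoMoneyPump Δ := by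
  have hagg : ∀ a, StrictMono (agg a) := fun a b c hbc =>
    hmono a a b c le_rfl hbc.le (by simp [hbc.ne'])
  have hrel : ∀ a b, Δ a b = relPayoff agg Pi a b := fun a b => by
    rw [hΔ, hsym b a, relPayoff]
  refine noMoneyPump_of_antisymm_of_pos_mono (fun a b => by rw [hΔ, hΔ]; ring) ?_ ?_
  · intro a b c hba hpos hcb
    rw [hrel] at hpos ⊢
    exact relPayoff_pos_of_le hagg hqc (fun _ _ _ _ hx hz => (hqsub _ _ _ _ hx hz).2)
      hba hpos hcb
  · intro a b c hab hpos hbc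
    rw [hrel] at hpos ⊢
    exact relPayoff_pos_of_ge hagg hqc (fun _ _ _ _ hx hz => (hqsub _ _ _ _ hx hz).1)
      hab hpos hbc

theorem stmt17
    {X Z : Type*} [LinearOrder X] [LinearOrder Z] [Nonempty X]
    (agg : X → X → Z)
    (hsym : ∀ x y : X, agg x y = agg y x)
    (hmono : ∀ x' x'' y' y'' : X, x' ≤ x'' → y' ≤ y'' → (x'', y'') ≠ (x', y') →
      agg x' y' < agg x'' y'')
    (Pi : X → Z → ℝ)
    [Fintype X]
    (hqsub : ∀ (x' x'' : X) (z' z'' : Z), x' < x'' → z' < z'' →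
      (0 ≤ Pi x'' z'' - Pi x' z'' → 0 ≤ Pi x'' z' - Pi x' z') ∧
      (0 < Pi x'' z'' - Pi x' z'' → 0 < Pi x'' z' - Pi x' z'))
    (hqc : ∀ (x x' x'' : X) (z : Z), x < x' → x' < x'' →
      min (Pi x z) (Pi x'' z) ≤ Pi x' z)
    (hfess : ∃ xs : X, ∀ x : X, Pi x (agg xs x) ≤ Pi xs (agg xs x))
    (Δ : X → X → ℝ)
    (hΔ : ∀ x y : X, Δ x y = Pi x (agg x y) - Pi y (agg y x)) :
    NoMoneyPump Δ :=
  stmt17_general agg hsym hmono Pi hqsub hqc Δ hΔ
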